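/- arXiv:math/0010075 — 4 statements merged into one kernel-verified Lean document; each statement's English description precedes it below -/
import Mathlib

section
/- Let $0 < p \le 1$ and $n \ge 1$. There exists a constant $C(p)$, depending only on $p$, such that for every finite collection $\mathcal{J}$ of dyadic cubes in $\mathbf{R}^n$ and every collection $\{f_Q : Q \in \mathcal{J}\}$ of nonnegative integrable functions on $\mathbf{R}^n$ with $\operatorname{supp} f_Q \subseteq Q$, one has $\big\| \sum_{Q \in \mathcal{J}} f_Q \big\|_{L^p(\mathbf{R}^n)} \le C(p) \, \big\| \sum_{Q \in \mathcal{J}} a_Q \chi_Q \big\|_{L^p(\mathbf{R}^n)}$, where $a_Q = |Q|^{-1} \int_Q f_Q(x)\,dx$. -/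
/-!
Write `F = ∑ f_Q` and `g = ∑ a_Q χ_Q`. Hölder's inequality with exponents `1/p` and `1/(1-p)`
gives `∫ F^p ≤ (∫ F g^(p-1))^p (∫ g^p)^(1-p)`, so it suffices to show
`p ∫ F g^(p-1) ≤ ∫ g^p`, which yields `C(p) = 1/p`. On `Q` the function `g` dominates
`G_Q = ∑_{Q' ⊇ Q} a_{Q'}`, hence `∫ f_Q g^(p-1) ≤ a_Q |Q| G_Q^(p-1)`. Finally
`p ∑_Q a_Q G_Q^(p-1) χ_Q ≤ g^p` pointwise: the cubes containing a point form a chain, and along a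
chain the concavity inequality `p c (c + a)^(p-1) ≤ (c + a)^p - a^p` telescopes.
-/

open MeasureTheory Set

noncomputable section

def IsDyadicCube {n : ℕ} (Q : Set (EuclideanSpace ℝ (Fin n))) : Prop :=
  ∃ (j : ℤ) (k : Fin n → ℤ),
    Q = {x | ∀ i, x i ∈ Set.Ico ((2:ℝ) ^ (-j) * k i) ((2:ℝ) ^ (-j) * (k i + 1))}

open scoped ENNReal
open Finset

theorem Real.mul_mul_rpow_sub_one_add_rpow_le {p : ℝ} (hp0 : 0 < p) (hp1 : p ≤ 1) {c a : ℝ}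
    (hc : 0 ≤ c) (ha : 0 ≤ a) : p * c * (c + a) ^ (p - 1) + a ^ p ≤ (c + a) ^ p := by
  rcases (add_nonneg hc ha).eq_or_lt with h | hb
  · obtain rfl : c = 0 := by linarith
    obtain rfl : a = 0 := by linarith
    simp [Real.zero_rpow hp0.ne']
  set b := c + a
  -- Bernoulli's inequality `(1 + s) ^ p ≤ 1 + p s` at `s = -c / b`.
  have hB := rpow_one_add_le_one_add_mul_self (s := -c / b)
    (by rw [neg_div, neg_le_neg_iff, div_le_one hb]; linarith) hp0.le hp1
  have h1 : 1 + -c / b = a / b := by field_simp; ring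
  rw [h1, Real.div_rpow ha hb.le, div_le_iff₀ (by positivity)] at hB
  rw [Real.rpow_sub_one hb.ne']
  have : p * c * (b ^ p / b) = -(p * (-c / b) * b ^ p) := by ring
  rw [this]
  linarith

theorem ENNReal.ofReal_mul_mul_rpow_sub_one_add_rpow_le {p : ℝ} (hp0 : 0 < p) (hp1 : p ≤ 1)
    {c a : ℝ≥0∞} (hc : c ≠ ⊤) (ha : a ≠ ⊤) :
    ENNReal.ofReal p * c * (c + a) ^ (p - 1) + a ^ p ≤ (c + a) ^ p := by
  rcases eq_or_ne (c + a) 0 with h | h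
  · obtain ⟨rfl, rfl⟩ := add_eq_zero.1 h
    simp [ENNReal.zero_rpow_of_pos hp0]
  have hb : 0 < c.toReal + a.toReal := by
    rw [← ENNReal.toReal_add hc ha]
    exact ENNReal.toReal_pos h (ENNReal.add_ne_top.2 ⟨hc, ha⟩)
  rw [← ENNReal.ofReal_toReal hc, ← ENNReal.ofReal_toReal ha, ← ENNReal.ofReal_add
    ENNReal.toReal_nonneg ENNReal.toReal_nonneg, ENNReal.ofReal_rpow_of_pos hb,
    ENNReal.ofReal_rpow_of_pos hb, ENNReal.ofReal_rpow_of_nonneg ENNReal.toReal_nonneg hp0.le,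
    ← ENNReal.ofReal_mul hp0.le, ← ENNReal.ofReal_mul (by positivity),
    ← ENNReal.ofReal_add (by positivity) (by positivity)]
  exact ENNReal.ofReal_le_ofReal
    (Real.mul_mul_rpow_sub_one_add_rpow_le hp0 hp1 ENNReal.toReal_nonneg ENNReal.toReal_nonneg)

theorem ENNReal.rpow_le_rpow_of_nonpos {x y : ℝ≥0∞} {z : ℝ} (hxy : x ≤ y) (hz : z ≤ 0) :
    y ^ z ≤ x ^ z := by
  rw [← neg_neg z, ENNReal.rpow_neg y, ENNReal.rpow_neg x]
  exact ENNReal.inv_le_inv.2 (ENNReal.rpow_le_rpow hxy (neg_nonneg.2 hz))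

theorem IsChain.ofReal_mul_sum_mul_rpow_le {α : Type*} [PartialOrder α] [DecidableLE α]
    {p : ℝ} (hp0 : 0 < p) (hp1 : p ≤ 1) {S : Finset α} (hS : IsChain (· ≤ ·) (S : Set α))
    {A : α → ℝ≥0∞} (hA : ∀ a ∈ S, A a ≠ ⊤) :
    ENNReal.ofReal p * ∑ a ∈ S, A a * (∑ b ∈ S with a ≤ b, A b) ^ (p - 1) ≤
      (∑ a ∈ S, A a) ^ p := by
  classical
  induction S using Finset.strongInduction with
  | H S ih =>
  rcases S.eq_empty_or_nonempty with rfl | hne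
  · simp
  obtain ⟨a₀, ha₀, hmin⟩ := S.exists_minimal hne
  have hleast : ∀ b ∈ S, a₀ ≤ b := fun b hb => (hS.total ha₀ hb).elim id (hmin hb)
  have hup : ∀ a ∈ S.erase a₀, {b ∈ S | a ≤ b} = {b ∈ S.erase a₀ | a ≤ b} := by
    intro a ha
    ext b
    simp only [mem_filter, mem_erase, and_congr_left_iff, iff_and_self]
    rintro hab - rfl
    exact (mem_erase.1 ha).1 (le_antisymm hab (hleast a (mem_of_mem_erase ha)))
  have hT := ih (S.erase a₀) (erase_ssubset ha₀) (hS.mono (by simp))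
    fun a ha => hA a (mem_of_mem_erase ha)
  have hsplit : ∑ a ∈ S, A a * (∑ b ∈ S with a ≤ b, A b) ^ (p - 1) =
      A a₀ * (∑ a ∈ S, A a) ^ (p - 1) +
        ∑ a ∈ S.erase a₀, A a * (∑ b ∈ S.erase a₀ with a ≤ b, A b) ^ (p - 1) := by
    rw [← add_sum_erase S _ ha₀, filter_true_of_mem hleast]
    exact congrArg _ (sum_congr rfl fun a ha => by rw [hup a ha])
  rw [hsplit, ← add_sum_erase S A ha₀, mul_add, ← mul_assoc]
  calc _ ≤ ENNReal.ofReal p * A a₀ * (A a₀ + ∑ a ∈ S.erase a₀, A a) ^ (p - 1)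
        + (∑ a ∈ S.erase a₀, A a) ^ p := by gcongr
    _ ≤ _ := ENNReal.ofReal_mul_mul_rpow_sub_one_add_rpow_le hp0 hp1 (hA a₀ ha₀)
        (ENNReal.sum_ne_top.2 fun a ha => hA a (mem_of_mem_erase ha))

section Laminar

variable {X : Type*}

def IsLaminar (𝒥 : Set (Set X)) : Prop :=
  ∀ Q ∈ 𝒥, ∀ Q' ∈ 𝒥, Disjoint Q Q' ∨ Q ⊆ Q' ∨ Q' ⊆ Q

open scoped Classical in
theorem IsLaminar.isChain_filter_mem {J : Finset (Set X)} (hJ : IsLaminar (J : Set (Set X)))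
    (x : X) : IsChain (· ≤ ·) (({Q ∈ J | x ∈ Q} : Finset (Set X)) : Set (Set X)) := by
  intro Q hQ Q' hQ' _
  simp only [coe_filter, mem_ofPred_eq] at hQ hQ'
  exact (hJ Q hQ.1 Q' hQ'.1).resolve_left (not_disjoint_iff.2 ⟨x, hQ.2, hQ'.2⟩)

variable {p : ℝ}

open scoped Classical in
theorem IsLaminar.ofReal_mul_sum_indicator_le (hp0 : 0 < p) (hp1 : p ≤ 1)
    {J : Finset (Set X)} (hJ : IsLaminar (J : Set (Set X))) {A : Set X → ℝ≥0∞}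
    (hA : ∀ Q ∈ J, A Q ≠ ⊤) (x : X) :
    ENNReal.ofReal p *
        ∑ Q ∈ J, Q.indicator (fun _ => A Q * (∑ Q' ∈ J with Q ⊆ Q', A Q') ^ (p - 1)) x ≤
      (∑ Q ∈ J, Q.indicator (fun _ => A Q) x) ^ p := by
  have hup : ∀ Q ∈ {Q ∈ J | x ∈ Q},
      {Q' ∈ J | Q ⊆ Q'} = {Q' ∈ {Q ∈ J | x ∈ Q} | Q ≤ Q'} := by
    intro Q hQ
    rw [filter_filter]
    exact filter_congr fun Q' _ => ⟨fun h => ⟨h ((mem_filter.1 hQ).2), h⟩, And.right⟩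
  simp only [sum_indicator_eq_sum_filter]
  rw [sum_congr rfl fun Q hQ => by rw [hup Q hQ]]
  exact (hJ.isChain_filter_mem x).ofReal_mul_sum_mul_rpow_le hp0 hp1
    fun Q hQ => hA Q (mem_filter.1 hQ).1

end Laminar

section Integral

variable {X : Type*} [MeasurableSpace X] {μ : Measure X} {p : ℝ}

open scoped Classical in
theorem IsLaminar.ofReal_mul_lintegral_sum_mul_rpow_sub_one_le (hp0 : 0 < p) (hp1 : p ≤ 1)
    {J : Finset (Set X)} (hJ : IsLaminar (J : Set (Set X))) (hJm : ∀ Q ∈ J, MeasurableSet Q)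
    {F : Set X → X → ℝ≥0∞} (hF : ∀ Q ∈ J, AEMeasurable (F Q) μ)
    (hFQ : ∀ Q ∈ J, Function.support (F Q) ⊆ Q) {A : Set X → ℝ≥0∞} (hA : ∀ Q ∈ J, A Q ≠ ⊤)
    (hFA : ∀ Q ∈ J, ∫⁻ x, F Q x ∂μ = A Q * μ Q) :
    ENNReal.ofReal p * ∫⁻ x, (∑ Q ∈ J, F Q x) *
        (∑ Q ∈ J, Q.indicator (fun _ => A Q) x) ^ (p - 1) ∂μ ≤
      ∫⁻ x, (∑ Q ∈ J, Q.indicator (fun _ => A Q) x) ^ p ∂μ := by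
  set g := fun x => ∑ Q ∈ J, Q.indicator (fun _ => A Q) x
  set G := fun Q => ∑ Q' ∈ J with Q ⊆ Q', A Q'
  have hg : Measurable g :=
    Finset.measurable_sum _ fun Q hQ => measurable_const.indicator (hJm Q hQ)
  have hGg : ∀ Q ∈ J, ∀ x ∈ Q, G Q ≤ g x := by
    intro Q hQ x hx
    calc G Q = ∑ Q' ∈ J with Q ⊆ Q', Q'.indicator (fun _ => A Q') x :=
          sum_congr rfl fun Q' hQ' =>
            (indicator_of_mem ((mem_filter.1 hQ').2 hx) fun _ => A Q').symm
      _ ≤ g x := sum_le_sum_of_subset (filter_subset _ _)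
  have hFg : ∀ Q ∈ J, ∀ x, F Q x * g x ^ (p - 1) ≤ F Q x * G Q ^ (p - 1) := by
    intro Q hQ x
    by_cases hx : x ∈ Q
    · exact mul_le_mul_right (ENNReal.rpow_le_rpow_of_nonpos (hGg Q hQ x hx) (by linarith)) _
    · rw [Function.notMem_support.1 fun h => hx (hFQ Q hQ h), zero_mul, zero_mul]
  calc ENNReal.ofReal p * ∫⁻ x, (∑ Q ∈ J, F Q x) * g x ^ (p - 1) ∂μ
      = ENNReal.ofReal p * ∑ Q ∈ J, ∫⁻ x, F Q x * g x ^ (p - 1) ∂μ := by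
        simp_rw [sum_mul]
        rw [lintegral_finsetSum' (f := fun Q x => F Q x * g x ^ (p - 1)) _
          fun Q hQ => (hF Q hQ).mul (hg.pow_const _).aemeasurable]
    _ ≤ ENNReal.ofReal p * ∑ Q ∈ J, ∫⁻ x, F Q x * G Q ^ (p - 1) ∂μ :=
        mul_le_mul_right (sum_le_sum fun Q hQ => lintegral_mono (hFg Q hQ)) _
    _ = ∫⁻ x, ENNReal.ofReal p * ∑ Q ∈ J, Q.indicator (fun _ => A Q * G Q ^ (p - 1)) x ∂μ := by
        rw [lintegral_const_mul _ (Finset.measurable_sum _ fun Q hQ =>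
          measurable_const.indicator (hJm Q hQ)), lintegral_finsetSum _ fun Q hQ =>
          measurable_const.indicator (hJm Q hQ)]
        refine congrArg _ (sum_congr rfl fun Q hQ => ?_)
        rw [lintegral_mul_const'' _ (hF Q hQ), hFA Q hQ, lintegral_indicator_const (hJm Q hQ)]
        ring
    _ ≤ ∫⁻ x, g x ^ p ∂μ := lintegral_mono (hJ.ofReal_mul_sum_indicator_le hp0 hp1 hA)

theorem lintegral_rpow_le_of_lintegral_mul_rpow_sub_one_le (hp0 : 0 < p) (hp1 : p ≤ 1)
    {F g : X → ℝ≥0∞} (hF : AEMeasurable F μ) (hg : AEMeasurable g μ)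
    (hg_top : ∀ᵐ x ∂μ, g x ≠ ⊤) (hFg : ∀ᵐ x ∂μ, F x ≠ 0 → g x ≠ 0) {K : ℝ≥0∞}
    (h : ∫⁻ x, F x * g x ^ (p - 1) ∂μ ≤ K * ∫⁻ x, g x ^ p ∂μ) :
    ∫⁻ x, F x ^ p ∂μ ≤ K ^ p * ∫⁻ x, g x ^ p ∂μ := by
  have hpt : ∀ᵐ x ∂μ, F x ^ p ≤ (F x * g x ^ (p - 1)) ^ p * (g x ^ p) ^ (1 - p) := by
    filter_upwards [hg_top, hFg] with x hx_top hx
    rcases eq_or_ne (F x) 0 with h0 | h0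
    · simp [h0, ENNReal.zero_rpow_of_pos hp0]
    refine le_of_eq ?_
    rw [ENNReal.mul_rpow_of_nonneg _ _ hp0.le, mul_assoc, ← ENNReal.rpow_mul, ← ENNReal.rpow_mul,
      ← ENNReal.rpow_add _ _ (hx h0) hx_top]
    ring_nf
    rw [ENNReal.rpow_zero, mul_one]
  calc ∫⁻ x, F x ^ p ∂μ
      ≤ ∫⁻ x, (F x * g x ^ (p - 1)) ^ p * (g x ^ p) ^ (1 - p) ∂μ := lintegral_mono_ae hpt
    _ ≤ (∫⁻ x, F x * g x ^ (p - 1) ∂μ) ^ p * (∫⁻ x, g x ^ p ∂μ) ^ (1 - p) :=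
        ENNReal.lintegral_mul_norm_pow_le (hF.mul (hg.pow_const _)) (hg.pow_const _) hp0.le
          (by linarith) (by ring)
    _ ≤ (K * ∫⁻ x, g x ^ p ∂μ) ^ p * (∫⁻ x, g x ^ p ∂μ) ^ (1 - p) := by gcongr
    _ = K ^ p * ∫⁻ x, g x ^ p ∂μ := by
        rw [ENNReal.mul_rpow_of_nonneg _ _ hp0.le, mul_assoc,
          ← ENNReal.rpow_add_of_nonneg _ _ hp0.le (by linarith), add_sub_cancel, ENNReal.rpow_one]

end Integral

section Integral

variable {X : Type*} [MeasurableSpace X] {μ : Measure X} {p : ℝ}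

theorem eLpNorm_le_mul_of_lintegral_rpow_le (hp0 : 0 < p) {F g : X → ℝ≥0∞} {K : ℝ≥0∞}
    (h : ∫⁻ x, F x ^ p ∂μ ≤ K ^ p * ∫⁻ x, g x ^ p ∂μ) :
    eLpNorm F (ENNReal.ofReal p) μ ≤ K * eLpNorm g (ENNReal.ofReal p) μ := by
  simp only [eLpNorm_eq_lintegral_rpow_enorm_toReal (ENNReal.ofReal_ne_zero_iff.2 hp0)
    ENNReal.ofReal_ne_top, enorm_eq_self, ENNReal.toReal_ofReal hp0.le]
  calc _ ≤ (K ^ p * ∫⁻ x, g x ^ p ∂μ) ^ (1 / p) := ENNReal.rpow_le_rpow h (by positivity)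
    _ = _ := by
      rw [ENNReal.mul_rpow_of_nonneg _ _ (by positivity), ← ENNReal.rpow_mul,
        mul_one_div_cancel hp0.ne', ENNReal.rpow_one]

theorem eLpNorm_sum_eq_eLpNorm_sum_ofReal {ι : Type*} {s : Finset ι} {f : ι → X → ℝ}
    (hf : ∀ i ∈ s, ∀ x, 0 ≤ f i x) (q : ℝ≥0∞) :
    eLpNorm (fun x => ∑ i ∈ s, f i x) q μ =
      eLpNorm (fun x => ∑ i ∈ s, ENNReal.ofReal (f i x)) q μ :=
  eLpNorm_congr_enorm_ae <| ae_of_all _ fun x => by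
    rw [Real.enorm_eq_ofReal (sum_nonneg fun i hi => hf i hi x),
      ENNReal.ofReal_sum_of_nonneg fun i hi => hf i hi x, enorm_eq_self]

theorem IsLaminar.eLpNorm_sum_le (hp0 : 0 < p) (hp1 : p ≤ 1)
    {J : Finset (Set X)} (hJ : IsLaminar (J : Set (Set X))) (hJm : ∀ Q ∈ J, MeasurableSet Q)
    {F : Set X → X → ℝ≥0∞} (hF : ∀ Q ∈ J, AEMeasurable (F Q) μ)
    (hFQ : ∀ Q ∈ J, Function.support (F Q) ⊆ Q) {A : Set X → ℝ≥0∞} (hA : ∀ Q ∈ J, A Q ≠ ⊤)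
    (hFA : ∀ Q ∈ J, ∫⁻ x, F Q x ∂μ = A Q * μ Q) :
    eLpNorm (fun x => ∑ Q ∈ J, F Q x) (ENNReal.ofReal p) μ ≤
      ENNReal.ofReal p⁻¹ *
        eLpNorm (fun x => ∑ Q ∈ J, Q.indicator (fun _ => A Q) x) (ENNReal.ofReal p) μ := by
  set g := fun x => ∑ Q ∈ J, Q.indicator (fun _ => A Q) x
  have hAg : ∀ Q ∈ J, ∀ x ∈ Q, A Q ≤ g x := fun Q hQ x hx =>
    (indicator_of_mem hx fun _ => A Q).symm.le.trans
      (single_le_sum (f := fun Q => Q.indicator (fun _ => A Q) x) (fun _ _ => zero_le) hQ)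
  have hg_top : ∀ x, g x ≠ ⊤ := fun x => ENNReal.sum_ne_top.2 fun Q hQ =>
    ne_top_of_le_ne_top (hA Q hQ) (indicator_le_self' (fun _ _ => zero_le) x)
  have hFA0 : ∀ Q ∈ J, ∀ᵐ x ∂μ, F Q x ≠ 0 → A Q ≠ 0 := by
    intro Q hQ
    rcases eq_or_ne (A Q) 0 with h0 | h0
    · filter_upwards [(lintegral_eq_zero_iff' (hF Q hQ)).1 (by rw [hFA Q hQ, h0, zero_mul])]
        with x hx
      exact fun h => absurd hx h
    · exact ae_of_all _ fun _ _ => h0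
  have hFg : ∀ᵐ x ∂μ, ∑ Q ∈ J, F Q x ≠ 0 → g x ≠ 0 := by
    filter_upwards [(Filter.eventually_all_finset J).2 hFA0] with x hx hFx
    obtain ⟨Q, hQ, hQx⟩ := exists_ne_zero_of_sum_ne_zero hFx
    exact ((pos_iff_ne_zero.2 (hx Q hQ hQx)).trans_le (hAg Q hQ x (hFQ Q hQ hQx))).ne'
  refine eLpNorm_le_mul_of_lintegral_rpow_le hp0
    (lintegral_rpow_le_of_lintegral_mul_rpow_sub_one_le hp0 hp1
      (Finset.aemeasurable_fun_sum _ hF)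
      (Finset.measurable_sum _ fun Q hQ => measurable_const.indicator (hJm Q hQ)).aemeasurable
      (ae_of_all _ hg_top) hFg ?_)
  rw [ENNReal.ofReal_inv_of_pos hp0, ← ENNReal.div_eq_inv_mul,
    ENNReal.le_div_iff_mul_le (Or.inl (ENNReal.ofReal_ne_zero_iff.2 hp0))
      (Or.inl ENNReal.ofReal_ne_top), mul_comm]
  exact hJ.ofReal_mul_lintegral_sum_mul_rpow_sub_one_le hp0 hp1 hJm hF hFQ hA hFA

theorem ofReal_setAverage_mul_measure {f : X → ℝ} {Q : Set X} (hf : IntegrableOn f Q μ)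
    (hf0 : 0 ≤ᵐ[μ] f) (hfQ : Function.support f ⊆ Q) (hQ0 : μ Q ≠ 0) (hQ : μ Q ≠ ⊤) :
    ENNReal.ofReal (⨍ x in Q, f x ∂μ) * μ Q = ∫⁻ x, ENNReal.ofReal (f x) ∂μ := by
  rw [ofReal_setAverage hf (ae_restrict_of_ae hf0), ENNReal.div_mul_cancel hQ0 hQ,
    setLIntegral_eq_of_support_subset (f := fun x => ENNReal.ofReal (f x))
      ((Function.support_comp_subset ENNReal.ofReal_zero f).trans hfQ)]

end Integral

theorem mem_Ico_two_zpow_mul_iff {j k : ℤ} {t : ℝ} :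
    t ∈ Ico ((2:ℝ) ^ (-j) * k) ((2:ℝ) ^ (-j) * (k + 1)) ↔ ⌊(2:ℝ) ^ j * t⌋ = k := by
  have h2 : (0:ℝ) < 2 ^ j := zpow_pos two_pos j
  rw [Int.floor_eq_iff, zpow_neg, Set.mem_Ico, inv_mul_le_iff₀ h2, lt_inv_mul_iff₀ h2]

theorem Int.floor_two_zpow_mul_eq_of_le {j j' : ℤ} (h : j ≤ j') {s t : ℝ}
    (hst : ⌊(2:ℝ) ^ j' * s⌋ = ⌊(2:ℝ) ^ j' * t⌋) : ⌊(2:ℝ) ^ j * s⌋ = ⌊(2:ℝ) ^ j * t⌋ := by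
  obtain ⟨m, rfl⟩ := Int.le.dest h
  have hdiv : ∀ u : ℝ, (2:ℝ) ^ j * u = (2:ℝ) ^ (j + m) * u / (2 ^ m : ℕ) := fun u => by
    rw [zpow_add₀ two_ne_zero, zpow_natCast, Nat.cast_pow, Nat.cast_ofNat]
    field_simp
  rw [hdiv, hdiv, Int.floor_div_natCast, Int.floor_div_natCast, hst]

namespace IsDyadicCube

variable {n : ℕ} {Q Q' : Set (EuclideanSpace ℝ (Fin n))}

theorem subset_or_subset_of_mem (hQ : IsDyadicCube Q) (hQ' : IsDyadicCube Q')
    {x : EuclideanSpace ℝ (Fin n)} (hx : x ∈ Q) (hx' : x ∈ Q') : Q ⊆ Q' ∨ Q' ⊆ Q := by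
  obtain ⟨j, k, rfl⟩ := hQ
  obtain ⟨j', k', rfl⟩ := hQ'
  wlog h : j ≤ j' generalizing j j' k k'
  · exact (this j' k' hx' j k hx (le_of_not_ge h)).symm
  refine Or.inr fun y hy i => ?_
  simp only [mem_ofPred_eq, mem_Ico_two_zpow_mul_iff] at hx hx' hy ⊢
  rw [← hx i]
  exact Int.floor_two_zpow_mul_eq_of_le h ((hy i).trans (hx' i).symm)

theorem eq_preimage_pi (j : ℤ) (k : Fin n → ℤ)
    (hQ : Q = {x | ∀ i, x i ∈ Ico ((2:ℝ) ^ (-j) * k i) ((2:ℝ) ^ (-j) * (k i + 1))}) :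
    Q = (MeasurableEquiv.toLp 2 (Fin n → ℝ)).symm ⁻¹'
      (univ.pi fun i => Ico ((2:ℝ) ^ (-j) * k i) ((2:ℝ) ^ (-j) * (k i + 1))) := by
  rw [hQ]; ext x; simp [Set.mem_pi, MeasurableEquiv.coe_toLp_symm]

theorem measurableSet (hQ : IsDyadicCube Q) : MeasurableSet Q := by
  obtain ⟨j, k, h⟩ := hQ
  rw [eq_preimage_pi j k h]
  exact (MeasurableEquiv.toLp 2 (Fin n → ℝ)).symm.measurable
    (MeasurableSet.univ_pi fun i => measurableSet_Ico)

theorem volume_eq (hQ : IsDyadicCube Q) :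
    ∃ j : ℤ, volume Q = ENNReal.ofReal ((2:ℝ) ^ (-j)) ^ n := by
  obtain ⟨j, k, h⟩ := hQ
  refine ⟨j, ?_⟩
  rw [eq_preimage_pi j k h,
    (EuclideanSpace.volume_preserving_symm_measurableEquiv_toLp (Fin n)).measure_preimage
      (MeasurableSet.univ_pi fun i => measurableSet_Ico).nullMeasurableSet,
    volume_pi_pi]
  simp only [Real.volume_Ico, ← mul_sub, add_sub_cancel_left, mul_one, Finset.prod_const,
    Finset.card_univ, Fintype.card_fin]

theorem volume_ne_zero (hQ : IsDyadicCube Q) : volume Q ≠ 0 := by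
  obtain ⟨j, hj⟩ := hQ.volume_eq
  rw [hj]
  positivity

theorem volume_ne_top (hQ : IsDyadicCube Q) : volume Q ≠ ⊤ := by
  obtain ⟨j, hj⟩ := hQ.volume_eq
  rw [hj]
  exact ENNReal.pow_ne_top ENNReal.ofReal_ne_top

end IsDyadicCube

theorem isLaminar_of_forall_isDyadicCube {n : ℕ} {𝒥 : Set (Set (EuclideanSpace ℝ (Fin n)))}
    (h𝒥 : ∀ Q ∈ 𝒥, IsDyadicCube Q) : IsLaminar 𝒥 := by
  intro Q hQ Q' hQ'
  refine or_iff_not_imp_left.2 fun hQQ' => ?_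
  obtain ⟨x, hx, hx'⟩ := not_disjoint_iff.1 hQQ'
  exact (h𝒥 Q hQ).subset_or_subset_of_mem (h𝒥 Q' hQ') hx hx'

/-- Lemma 2 of Grafakos–Kalton: for a finite collection of dyadic cubes `Q ∈ 𝒥` and
nonnegative integrable functions `f_Q` supported in `Q`,
`‖∑ f_Q‖_{L^p} ≤ C(p) ‖∑ a_Q χ_Q‖_{L^p}` where `a_Q = |Q|⁻¹ ∫_Q f_Q`. -/
theorem stmt0 (p : ℝ) (hp0 : 0 < p) (hp1 : p ≤ 1) :
    ∃ C : ℝ, 0 < C ∧ ∀ (n : ℕ), 1 ≤ n →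
      ∀ (J : Finset (Set (EuclideanSpace ℝ (Fin n))))
        (f : Set (EuclideanSpace ℝ (Fin n)) → EuclideanSpace ℝ (Fin n) → ℝ),
        (∀ Q ∈ J, IsDyadicCube Q) →
        (∀ Q ∈ J, ∀ x, 0 ≤ f Q x) →
        (∀ Q ∈ J, Integrable (f Q)) →
        (∀ Q ∈ J, Function.support (f Q) ⊆ Q) →
        eLpNorm (fun x => ∑ Q ∈ J, f Q x) (ENNReal.ofReal p) volume ≤
          ENNReal.ofReal C *
            eLpNorm (fun x => ∑ Q ∈ J,
              ((volume Q).toReal⁻¹ * ∫ y in Q, f Q y) * Q.indicator 1 x)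
              (ENNReal.ofReal p) volume := by
  refine ⟨p⁻¹, inv_pos.2 hp0, fun n _ J f hJ hf0 hf hfQ => ?_⟩
  have havg : ∀ Q, (volume Q).toReal⁻¹ * ∫ y in Q, f Q y = ⨍ y in Q, f Q y := fun Q => by
    rw [setAverage_eq, smul_eq_mul, measureReal_def]
  have havg0 : ∀ Q ∈ J, 0 ≤ ⨍ y in Q, f Q y := fun Q hQ => by
    rw [← havg]
    exact mul_nonneg (by positivity)
      (setIntegral_nonneg (hJ Q hQ).measurableSet fun y _ => hf0 Q hQ y)
  have hind : ∀ Q x, ENNReal.ofReal ((⨍ y in Q, f Q y) * Q.indicator 1 x) =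
      Q.indicator (fun _ => ENNReal.ofReal (⨍ y in Q, f Q y)) x := fun Q x => by
    by_cases hx : x ∈ Q <;> simp [hx]
  simp only [havg]
  rw [eLpNorm_sum_eq_eLpNorm_sum_ofReal hf0,
    eLpNorm_sum_eq_eLpNorm_sum_ofReal (f := fun Q x => (⨍ y in Q, f Q y) * Q.indicator 1 x)
      fun Q hQ x => mul_nonneg (havg0 Q hQ) (indicator_nonneg (fun _ _ => zero_le_one) x)]
  simp only [hind]
  refine (isLaminar_of_forall_isDyadicCube hJ).eLpNorm_sum_le hp0 hp1
    (fun Q hQ => (hJ Q hQ).measurableSet) (fun Q hQ => (hf Q hQ).aemeasurable.ennreal_ofReal)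
    (fun Q hQ => (Function.support_comp_subset ENNReal.ofReal_zero _).trans (hfQ Q hQ))
    (fun _ _ => ENNReal.ofReal_ne_top) fun Q hQ => ?_
  exact (ofReal_setAverage_mul_measure (hf Q hQ).integrableOn (ae_of_all _ (hf0 Q hQ))
    (hfQ Q hQ) (hJ Q hQ).volume_ne_zero (hJ Q hQ).volume_ne_top).symm
end
end

section
/- Let $\mathcal{J}$ be a finite collection of dyadic cubes in $\mathbf{R}^n$, let $a_Q \ge 0$ for each $Q \in \mathcal{J}$, and set $G = \sum_{Q \in \mathcal{J}} a_Q \chi_Q$. Then for every $t \ge 0$ there exist coefficients $\mu_Q^t \in [0,1]$ ($Q \in \mathcal{J}$) such that $\sum_{Q \in \mathcal{J}} \mu_Q^t \, a_Q \chi_Q(x) = \min(t, G(x))$ for every $x \in \mathbf{R}^n$; moreover the coefficients can be chosen so that for each $Q$ the map $t \mapsto \mu_Q^t$ is nondecreasing. -/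
/-!
The cubes of `J` containing a point `x` are pairwise nested, hence form a chain. Put
`s_Q = ∑_{R ∈ J, Q ⊊ R} a_R` and let `μ_Q^t` be `(t - s_Q) / a_Q` clamped to `[0, 1]`, so that
`μ_Q^t a_Q = min(t, a_Q + s_Q) - min(t, s_Q)`, nondecreasing in `t`. Every cube strictly
containing a cube that contains `x` contains `x` itself, so along the chain of cubes containing `x`
these differences telescope to `min(t, G x) - min(t, 0)`.
-/

open MeasureTheory Set

noncomputable section

lemma mem_Ico_zpow_mul_iff_floor_eq (j k : ℤ) (y : ℝ) :
    y ∈ Ico ((2:ℝ) ^ (-j) * k) ((2:ℝ) ^ (-j) * (k + 1)) ↔ ⌊(2:ℝ) ^ j * y⌋ = k := by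
  have h2j : (0:ℝ) < 2 ^ j := by positivity
  rw [zpow_neg, mem_Ico, inv_mul_le_iff₀ h2j, lt_inv_mul_iff₀ h2j, Int.floor_eq_iff]

lemma floor_zpow_mul_eq_of_le {j j' : ℤ} (h : j ≤ j') {x y : ℝ}
    (hxy : ⌊(2:ℝ) ^ j' * x⌋ = ⌊(2:ℝ) ^ j' * y⌋) : ⌊(2:ℝ) ^ j * x⌋ = ⌊(2:ℝ) ^ j * y⌋ := by
  obtain ⟨d, rfl⟩ : ∃ d : ℕ, j' = j + d := ⟨(j' - j).toNat, by omega⟩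
  have hdiv (z : ℝ) : (2:ℝ) ^ j * z = (2:ℝ) ^ (j + d) * z / ((2 ^ d : ℕ) : ℝ) := by
    rw [zpow_add₀ two_ne_zero, zpow_natCast]; push_cast; field_simp
  rw [hdiv x, hdiv y, Int.floor_div_natCast, Int.floor_div_natCast, hxy]

lemma IsDyadicCube.subset_or_subset {n : ℕ} {Q R : Set (EuclideanSpace ℝ (Fin n))}
    (hQ : IsDyadicCube Q) (hR : IsDyadicCube R) {x : EuclideanSpace ℝ (Fin n)}
    (hxQ : x ∈ Q) (hxR : x ∈ R) : Q ⊆ R ∨ R ⊆ Q := by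
  obtain ⟨j, k, rfl⟩ := hQ
  obtain ⟨j', k', rfl⟩ := hR
  simp only [ofPred_subset_ofPred, mem_ofPred_eq, mem_Ico_zpow_mul_iff_floor_eq] at hxQ hxR ⊢
  have finer_subset {j j' : ℤ} {k k' : Fin n → ℤ} (h : j ≤ j')
      (hx : ∀ i, ⌊(2:ℝ) ^ j * x i⌋ = k i) (hx' : ∀ i, ⌊(2:ℝ) ^ j' * x i⌋ = k' i)
      (y : EuclideanSpace ℝ (Fin n)) (hy : ∀ i, ⌊(2:ℝ) ^ j' * y i⌋ = k' i) (i : Fin n) :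
      ⌊(2:ℝ) ^ j * y i⌋ = k i :=
    (floor_zpow_mul_eq_of_le h ((hy i).trans (hx' i).symm)).trans (hx i)
  rcases le_total j j' with h | h
  · exact Or.inr (finer_subset h hxQ hxR)
  · exact Or.inl (finer_subset h hxR hxQ)

lemma IsChain.sum_sub_telescope {β M G : Type*} [PartialOrder β] [DecidableLT β]
    [AddCommMonoid M] [AddCommGroup G] (f : M → G) (a : β → M) {F : Finset β}
    (hF : IsChain (· ≤ ·) (F : Set β)) :
    ∑ Q ∈ F, (f (a Q + ∑ R ∈ F with Q < R, a R) - f (∑ R ∈ F with Q < R, a R)) =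
      f (∑ Q ∈ F, a Q) - f 0 := by
  classical
  induction F using Finset.strongInduction with
  | H F ih =>
  rcases F.eq_empty_or_nonempty with rfl | hne
  · simp
  obtain ⟨Q₀, hQ₀F, hQ₀min⟩ := F.exists_minimal hne
  have hleast : ∀ R ∈ F, Q₀ ≤ R := fun R hR => (hF.total hQ₀F hR).elim id (hQ₀min hR)
  have above_Q₀ : {R ∈ F | Q₀ < R} = F.erase Q₀ := by
    ext R; simp only [Finset.mem_filter, Finset.mem_erase]
    exact ⟨fun h => ⟨h.2.ne', h.1⟩, fun h => ⟨h.2, (hleast R h.2).lt_of_ne' h.1⟩⟩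
  have above_of_mem_erase (Q) (hQ : Q ∈ F.erase Q₀) : {R ∈ F | Q < R} = {R ∈ F.erase Q₀ | Q < R} := by
    rw [Finset.filter_erase, Finset.erase_eq_of_notMem]
    simp only [Finset.mem_filter, not_and]
    exact fun _ => (hleast Q (Finset.mem_of_mem_erase hQ)).not_gt
  have sum_erase : ∑ Q ∈ F.erase Q₀, (f (a Q + ∑ R ∈ F with Q < R, a R) - f (∑ R ∈ F with Q < R, a R))
      = f (∑ Q ∈ F.erase Q₀, a Q) - f 0 := by
    rw [← ih _ (Finset.erase_ssubset hQ₀F) (hF.mono (by simp))]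
    exact Finset.sum_congr rfl fun Q hQ => by rw [above_of_mem_erase Q hQ]
  rw [← Finset.add_sum_erase F _ hQ₀F, sum_erase, above_Q₀, ← Finset.add_sum_erase F a hQ₀F]
  abel

lemma min_one_max_zero_div_mul {a : ℝ} (ha : 0 ≤ a) (t c : ℝ) :
    min 1 (max 0 ((t - c) / a)) * a = min t (c + a) - min t c := by
  rcases ha.eq_or_lt with rfl | ha
  · simp
  rw [min_mul_of_nonneg _ _ ha.le, max_mul_of_nonneg _ _ ha.le, div_mul_cancel₀ _ ha.ne', one_mul,
    zero_mul]
  grind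

lemma Finset.sum_mul_indicator_one_eq_sum_filter {α : Type*} (s : Finset (Set α))
    (g : Set α → ℝ) (x : α) [DecidablePred fun Q : Set α => x ∈ Q] :
    ∑ Q ∈ s, g Q * Q.indicator 1 x = ∑ Q ∈ s with x ∈ Q, g Q := by
  rw [Finset.sum_filter]
  exact Finset.sum_congr rfl fun Q _ => by by_cases hx : x ∈ Q <;> simp [hx]

/-- For a finite collection `𝒥` of dyadic cubes with nonnegative coefficients `a_Q` and
`G = ∑ a_Q χ_Q`, for every `t ≥ 0` there are coefficients `μ_Q^t ∈ [0,1]` with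
`∑ μ_Q^t a_Q χ_Q = min(t, G)` pointwise, chosen nondecreasingly in `t`. -/
theorem stmt2 (n : ℕ) (J : Finset (Set (EuclideanSpace ℝ (Fin n))))
    (hJ : ∀ Q ∈ J, IsDyadicCube Q)
    (a : Set (EuclideanSpace ℝ (Fin n)) → ℝ) (ha : ∀ Q ∈ J, 0 ≤ a Q) :
    ∃ μ : ℝ → Set (EuclideanSpace ℝ (Fin n)) → ℝ,
      (∀ t, 0 ≤ t → ∀ Q ∈ J, μ t Q ∈ Set.Icc (0 : ℝ) 1) ∧
      (∀ t, 0 ≤ t → ∀ x, ∑ Q ∈ J, μ t Q * a Q * Q.indicator 1 x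
          = min t (∑ Q ∈ J, a Q * Q.indicator 1 x)) ∧
      (∀ Q ∈ J, ∀ s t, 0 ≤ s → s ≤ t → μ s Q ≤ μ t Q) := by
  classical
  set above : Set (EuclideanSpace ℝ (Fin n)) → ℝ := fun Q => ∑ R ∈ J with Q < R, a R
  refine ⟨fun t Q => min 1 (max 0 ((t - above Q) / a Q)),
    fun t _ Q _ => ⟨le_min zero_le_one (le_max_left _ _), min_le_left _ _⟩, fun t ht x => ?_,
    fun Q hQ s t _ hst => by have := ha Q hQ; dsimp only; gcongr⟩
  set F := {Q ∈ J | x ∈ Q}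
  have hF : IsChain (· ≤ ·) (F : Set (Set (EuclideanSpace ℝ (Fin n)))) := by
    intro Q hQ R hR _
    simp only [Finset.coe_filter, mem_ofPred_eq, F] at hQ hR
    exact (hJ Q hQ.1).subset_or_subset (hJ R hR.1) hQ.2 hR.2
  have above_eq (Q) (hQ : Q ∈ F) : above Q = ∑ R ∈ F with Q < R, a R := by
    simp only [above, F, Finset.filter_filter]
    refine Finset.sum_congr (Finset.filter_congr fun R _ => ?_) fun _ _ => rfl
    exact ⟨fun h => ⟨h.le (Finset.mem_filter.mp hQ).2, h⟩, And.right⟩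
  calc ∑ Q ∈ J, min 1 (max 0 ((t - above Q) / a Q)) * a Q * Q.indicator 1 x
      = ∑ Q ∈ F, (min t (a Q + ∑ R ∈ F with Q < R, a R) - min t (∑ R ∈ F with Q < R, a R)) := by
        refine (Finset.sum_mul_indicator_one_eq_sum_filter _ _ _).trans
          (Finset.sum_congr rfl fun Q hQ => ?_)
        rw [min_one_max_zero_div_mul (ha Q (Finset.mem_filter.mp hQ).1), add_comm, above_eq Q hQ]
    _ = min t (∑ Q ∈ J, a Q * Q.indicator 1 x) := by
        rw [hF.sum_sub_telescope (min t) a, min_eq_right ht, sub_zero,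
          Finset.sum_mul_indicator_one_eq_sum_filter J a x]
end
end

section
/- Let $0 < p \le 1$. There exists a constant $C(p)$, depending only on $p$, with the following property: if $G : \mathbf{R}^n \to [0,\infty]$ is measurable and $(h_j)_{j \in \mathbf{Z}}$ are nonnegative measurable functions on $\mathbf{R}^n$ such that for each $j$ the function $h_j$ vanishes almost everywhere on the set $\{x : G(x) \le 2^{j-1}\}$ and $\int_{\mathbf{R}^n} h_j(x)\,dx \le 2^j \, |\{ x : G(x) > 2^{j-1} \}|$, then $\int_{\mathbf{R}^n} \big( \sum_{j \in \mathbf{Z}} h_j(x) \big)^p dx \le C(p) \int_{\mathbf{R}^n} G(x)^p \, dx$. -/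
/-!
Since `p ≤ 1`, `(∑ⱼ hⱼ)^p ≤ ∑ⱼ hⱼ^p`, and Hölder's inequality on `Eⱼ = {G > 2^(j-1)}`, outside of
which `hⱼ` vanishes, gives `∫ hⱼ^p ≤ (∫ hⱼ)^p |Eⱼ|^(1-p) ≤ 2^(jp) |Eⱼ|`. Finally
`∑ⱼ 2^(jp) |Eⱼ| = ∫ ∑ⱼ 2^(jp) 1_{Eⱼ}`, and at each point the inner sum is a geometric series
dominated by its largest term, which is at most `2^p G^p`; this gives `C(p) = 2^p / (1 - 2^(-p))`.
-/

open MeasureTheory Set ENNReal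

theorem ENNReal.tsum_rpow_le_tsum_rpow {ι : Type*} (f : ι → ℝ≥0∞) {p : ℝ} (hp0 : 0 < p)
    (hp1 : p ≤ 1) : (∑' i, f i) ^ p ≤ ∑' i, f i ^ p := by
  classical
  rw [ENNReal.tsum_eq_iSup_sum, Monotone.map_iSup_of_continuousAt
    ENNReal.continuous_rpow_const.continuousAt (ENNReal.monotone_rpow_of_nonneg hp0.le)
    (ENNReal.zero_rpow_of_pos hp0)]
  refine iSup_le fun s => le_trans ?_ (ENNReal.sum_le_tsum s)
  induction s using Finset.induction with
  | empty => simp [ENNReal.zero_rpow_of_pos hp0]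
  | insert a s ha ih =>
    rw [Finset.sum_insert ha, Finset.sum_insert ha]
    exact (ENNReal.rpow_add_le_add_rpow _ _ hp0.le hp1).trans (add_le_add_right ih _)

section

variable {α : Type*} [MeasurableSpace α] {μ : Measure α} {p : ℝ} {f : α → ℝ≥0∞}

theorem lintegral_rpow_le_rpow_lintegral_mul_measure_univ (hp0 : 0 < p) (hp1 : p ≤ 1)
    (hf : AEMeasurable f μ) : ∫⁻ x, f x ^ p ∂μ ≤ (∫⁻ x, f x ∂μ) ^ p * μ univ ^ (1 - p) := by
  have h := eLpNorm'_le_eLpNorm'_mul_rpow_measure_univ hp0 hp1 hf.aestronglyMeasurable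
  simp only [eLpNorm'_eq_lintegral_enorm, enorm_eq_self, ENNReal.rpow_one, div_one] at h
  have h' := ENNReal.rpow_le_rpow h hp0.le
  rwa [← ENNReal.rpow_mul, one_div_mul_cancel hp0.ne', ENNReal.rpow_one,
    ENNReal.mul_rpow_of_nonneg _ _ hp0.le, ← ENNReal.rpow_mul,
    show (1 / p - 1) * p = 1 - p by field_simp] at h'

theorem lintegral_rpow_le_of_lintegral_le_mul_measure (hp0 : 0 < p) (hp1 : p ≤ 1)
    (hf : AEMeasurable f μ) {s : Set α} (hs : MeasurableSet s) (hfs : ∀ᵐ x ∂μ, x ∉ s → f x = 0)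
    {a : ℝ≥0∞} (hfa : ∫⁻ x, f x ∂μ ≤ a * μ s) : ∫⁻ x, f x ^ p ∂μ ≤ a ^ p * μ s := by
  calc ∫⁻ x, f x ^ p ∂μ
      = ∫⁻ x in s, f x ^ p ∂μ := by
        rw [← lintegral_indicator hs]
        refine lintegral_congr_ae ?_
        filter_upwards [hfs] with x hx
        by_cases hxs : x ∈ s
        · simp [hxs]
        · simp [hxs, hx hxs, ENNReal.zero_rpow_of_pos hp0]
    _ ≤ (∫⁻ x in s, f x ∂μ) ^ p * μ s ^ (1 - p) := by
      simpa only [Measure.restrict_apply_univ] using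
        lintegral_rpow_le_rpow_lintegral_mul_measure_univ hp0 hp1 hf.restrict
    _ ≤ (a * μ s) ^ p * μ s ^ (1 - p) := by
      gcongr
      exact (setLIntegral_le_lintegral s f).trans hfa
    _ = a ^ p * μ s := by
      rw [ENNReal.mul_rpow_of_nonneg _ _ hp0.le, mul_assoc,
        ← ENNReal.rpow_add_of_nonneg _ _ hp0.le (by linarith), add_sub_cancel, ENNReal.rpow_one]

end

theorem ENNReal.tsum_ite_rpow_intCast_lt_le {q : ℝ≥0∞} (hq : 1 < q) (hq_top : q ≠ ∞)
    (s : ℝ≥0∞) :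
    ∑' k : ℤ, (if q ^ (k : ℝ) < s then q ^ (k : ℝ) else 0) ≤ (1 - q⁻¹)⁻¹ * s := by
  by_cases hex : ∃ k : ℤ, q ^ (k : ℝ) < s
  swap
  · push Not at hex
    exact (ENNReal.tsum_eq_zero.2 fun k => if_neg (hex k).not_gt).trans_le zero_le
  rcases eq_or_ne s ∞ with rfl | hs_top
  · rw [ENNReal.mul_top (ENNReal.inv_ne_zero.2 (ENNReal.sub_ne_top ENNReal.one_ne_top))]
    exact le_top
  have hq0 : q ≠ 0 := (zero_lt_one.trans hq).ne'
  obtain ⟨K, hK⟩ := (((ENNReal.tendsto_rpow_atTop_of_one_lt_base hq).comp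
    tendsto_intCast_atTop_atTop).eventually (lt_mem_nhds hs_top.lt_top)).exists
  obtain ⟨m, hm, hmax⟩ := Int.exists_greatest_of_bdd
    ⟨K, fun k hk => by
      by_contra! hKk
      exact (hk.trans (hK : s < q ^ (K : ℝ))).not_ge
        (ENNReal.rpow_le_rpow_of_exponent_le hq.le (by exact_mod_cast hKk.le))⟩ hex
  have hsupport : (Function.support fun k : ℤ => if q ^ (k : ℝ) < s then q ^ (k : ℝ) else 0) ⊆
      range fun i : ℕ => m - i := by
    intro k hk
    have hkm : k ≤ m := hmax k (by by_contra h; exact hk (if_neg h))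
    exact ⟨(m - k).toNat, show m - ((m - k).toNat : ℤ) = k by omega⟩
  rw [← (sub_right_injective.comp Nat.cast_injective).tsum_eq hsupport]
  calc ∑' i : ℕ, (if q ^ ((m - i : ℤ) : ℝ) < s then q ^ ((m - i : ℤ) : ℝ) else 0)
      ≤ ∑' i : ℕ, q ^ (m : ℝ) * q⁻¹ ^ i := by
        refine ENNReal.tsum_le_tsum fun i => ?_
        split_ifs
        · rw [Int.cast_sub, Int.cast_natCast, ENNReal.rpow_sub _ _ hq0 hq_top,
            ENNReal.rpow_natCast, div_eq_mul_inv, ENNReal.inv_pow]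
        · exact zero_le
    _ = q ^ (m : ℝ) * (1 - q⁻¹)⁻¹ := by rw [ENNReal.tsum_mul_left, ENNReal.tsum_geometric]
    _ ≤ (1 - q⁻¹)⁻¹ * s := by rw [mul_comm]; gcongr

theorem ENNReal.tsum_ite_two_rpow_sub_one_lt_le {p : ℝ} (hp : 0 < p) (t : ℝ≥0∞) :
    ∑' j : ℤ, (if (2 : ℝ≥0∞) ^ ((j : ℝ) - 1) < t then ((2 : ℝ≥0∞) ^ (j : ℝ)) ^ p else 0) ≤
      2 ^ p * (1 - (2 ^ p)⁻¹)⁻¹ * t ^ p := by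
  have h2p : (1 : ℝ≥0∞) < 2 ^ p := ENNReal.one_lt_rpow one_lt_two hp
  have h2p_top : (2 : ℝ≥0∞) ^ p ≠ ∞ := ENNReal.rpow_ne_top_of_nonneg hp.le ENNReal.ofNat_ne_top
  have hterm (k : ℤ) :
      (if (2 : ℝ≥0∞) ^ (((k + 1 : ℤ) : ℝ) - 1) < t then ((2 : ℝ≥0∞) ^ ((k + 1 : ℤ) : ℝ)) ^ p
        else 0) =
      2 ^ p * if (2 ^ p) ^ (k : ℝ) < t ^ p then (2 ^ p) ^ (k : ℝ) else 0 := by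
    have hswap : ((2 : ℝ≥0∞) ^ p) ^ (k : ℝ) = (2 ^ (k : ℝ)) ^ p := by
      rw [← ENNReal.rpow_mul, mul_comm, ENNReal.rpow_mul]
    have hcond : (2 : ℝ≥0∞) ^ (k : ℝ) < t ↔ ((2 : ℝ≥0∞) ^ p) ^ (k : ℝ) < t ^ p := by
      rw [hswap, ENNReal.rpow_lt_rpow_iff hp]
    rw [Int.cast_add, Int.cast_one, add_sub_cancel_right,
      ENNReal.rpow_add _ _ two_ne_zero ENNReal.ofNat_ne_top, ENNReal.rpow_one,
      ENNReal.mul_rpow_of_nonneg _ _ hp.le, mul_comm, ← hswap]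
    simp only [hcond, mul_ite, mul_zero]
  calc _ = ∑' k : ℤ, (2 : ℝ≥0∞) ^ p *
          if ((2 : ℝ≥0∞) ^ p) ^ (k : ℝ) < t ^ p then ((2 : ℝ≥0∞) ^ p) ^ (k : ℝ) else 0 :=
        ((Equiv.addRight (1 : ℤ)).tsum_eq _).symm.trans (tsum_congr hterm)
    _ ≤ _ := by
      rw [ENNReal.tsum_mul_left, mul_assoc]
      gcongr
      exact ENNReal.tsum_ite_rpow_intCast_lt_le h2p h2p_top _

/-- For `0 < p ≤ 1` there is `C(p)` such that: if `G : ℝⁿ → [0,∞]` is measurable and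
`(h_j)_{j ∈ ℤ}` are nonnegative measurable functions with `h_j = 0` a.e. on
`{G ≤ 2^{j-1}}` and `∫ h_j ≤ 2^j |{G > 2^{j-1}}|`, then
`∫ (∑_j h_j)^p ≤ C(p) ∫ G^p`. -/
theorem stmt4 (p : ℝ) (hp0 : 0 < p) (hp1 : p ≤ 1) :
    ∃ C : ℝ, 0 < C ∧ ∀ (n : ℕ) (G : EuclideanSpace ℝ (Fin n) → ℝ≥0∞)
      (h : ℤ → EuclideanSpace ℝ (Fin n) → ℝ≥0∞),
      Measurable G →
      (∀ j, Measurable (h j)) →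
      (∀ j : ℤ, ∀ᵐ x ∂volume, G x ≤ (2 : ℝ≥0∞) ^ ((j : ℝ) - 1) → h j x = 0) →
      (∀ j : ℤ, ∫⁻ x, h j x ≤
          (2 : ℝ≥0∞) ^ (j : ℝ) * volume {x | (2 : ℝ≥0∞) ^ ((j : ℝ) - 1) < G x}) →
      ∫⁻ x, (∑' j : ℤ, h j x) ^ p ≤ ENNReal.ofReal C * ∫⁻ x, G x ^ p := by
  set K : ℝ≥0∞ := 2 ^ p * (1 - (2 ^ p)⁻¹)⁻¹
  have hK0 : K ≠ 0 := mul_ne_zero (ENNReal.rpow_pos two_pos ENNReal.ofNat_ne_top).ne'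
    (ENNReal.inv_ne_zero.2 (ENNReal.sub_ne_top ENNReal.one_ne_top))
  have hK_top : K ≠ ∞ := ENNReal.mul_ne_top
    (ENNReal.rpow_ne_top_of_nonneg hp0.le ENNReal.ofNat_ne_top)
    (ENNReal.inv_ne_top.2 (tsub_pos_of_lt (ENNReal.inv_lt_one.2
      (ENNReal.one_lt_rpow one_lt_two hp0))).ne')
  refine ⟨K.toReal, ENNReal.toReal_pos hK0 hK_top, fun n G h hG hh hh_zero hh_int => ?_⟩
  rw [ENNReal.ofReal_toReal hK_top]
  set E : ℤ → Set (EuclideanSpace ℝ (Fin n)) := fun j => {x | (2 : ℝ≥0∞) ^ ((j : ℝ) - 1) < G x}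
  have hE (j : ℤ) : MeasurableSet (E j) := hG measurableSet_Ioi
  calc ∫⁻ x, (∑' j, h j x) ^ p
      ≤ ∫⁻ x, ∑' j, h j x ^ p := lintegral_mono fun x => ENNReal.tsum_rpow_le_tsum_rpow _ hp0 hp1
    _ = ∑' j, ∫⁻ x, h j x ^ p := lintegral_tsum fun j => ((hh j).pow_const p).aemeasurable
    _ ≤ ∑' j : ℤ, ((2 : ℝ≥0∞) ^ (j : ℝ)) ^ p * volume (E j) := ENNReal.tsum_le_tsum fun j =>
        lintegral_rpow_le_of_lintegral_le_mul_measure hp0 hp1 (hh j).aemeasurable (hE j)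
          ((hh_zero j).mono fun x hx hxE => hx (not_lt.1 hxE)) (hh_int j)
    _ = ∫⁻ x, ∑' j, (E j).indicator (fun _ => ((2 : ℝ≥0∞) ^ (j : ℝ)) ^ p) x := by
        rw [lintegral_tsum fun j => (measurable_const.indicator (hE j)).aemeasurable]
        simp only [lintegral_indicator_const (hE _)]
    _ ≤ ∫⁻ x, K * G x ^ p := by
        refine lintegral_mono fun x => ?_
        simp only [Set.indicator_apply, E, Set.mem_ofPred_eq]
        exact ENNReal.tsum_ite_two_rpow_sub_one_lt_le hp0 (G x)
    _ = K * ∫⁻ x, G x ^ p := lintegral_const_mul K (hG.pow_const p)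
end

section
/- Let $m, n \ge 1$, let $0 < p_1, \dots, p_m \le 1$ and define $p$ by $1/p = 1/p_1 + \dots + 1/p_m$, and let $s$ be a real number with $s > n(1/p_j - 1)$ for every $j$. Then there is a constant $C = C(n, m, s, p_1, \dots, p_m)$ such that for all finite families of axis-parallel cubes $Q_{j,k}$ in $\mathbf{R}^n$ (with centers $c_{j,k}$ and side lengths $l_{j,k}$), indexed by $1 \le j \le m$ and $k$ in finite index sets, and all nonnegative coefficients $\lambda_{j,k}$, one has $\Big\| \prod_{j=1}^m \Big( \sum_{k} \lambda_{j,k} \frac{ |Q_{j,k}|^{\,1 - 1/p_j + s/n} }{ (|x - c_{j,k}| + l_{j,k})^{\,n+s} } \Big) \Big\|_{L^{p}(\mathbf{R}^n)} \le C \prod_{j=1}^m \Big( \sum_{k} \lambda_{j,k}^{\,p_j} \Big)^{1/p_j}$. -/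
/-! Since `p j ≤ 1`, the `p j`-th power of the `j`-th factor is at most the sum of the `p j`-th
powers of its terms. A translation and a dilation by `l` show that the `p j`-th power of every
normalised bump `|Q| ^ (1 - 1 / p j + s / n) / (|x - c| + l) ^ (n + s)` has the same integral
`∫ (1 + |y|) ^ (-(n + s) p j)`, which is finite exactly because `s > n (1 / p j - 1)`. So the
`L^{p j}` quasi-norm of the `j`-th factor is at most a constant times `(∑ λ ^ p j) ^ (1 / p j)`,
and the generalised Hölder inequality with `1 / q = ∑ 1 / p j` bounds the `L^q` quasi-norm of
the product by the product of these quasi-norms. -/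

open MeasureTheory Module
open scoped ENNReal

theorem ENNReal.rpow_finset_sum_le_sum_rpow {ι : Type*} (s : Finset ι) (f : ι → ℝ≥0∞) {r : ℝ}
    (hr0 : 0 < r) (hr1 : r ≤ 1) : (∑ i ∈ s, f i) ^ r ≤ ∑ i ∈ s, f i ^ r := by
  induction s using Finset.cons_induction with
  | empty => simp [ENNReal.zero_rpow_of_pos hr0]
  | cons a s ha ih =>
    rw [Finset.sum_cons, Finset.sum_cons]
    exact (ENNReal.rpow_add_le_add_rpow _ _ hr0.le hr1).trans (by gcongr)

theorem Finset.enorm_prod_le {ι R : Type*} [NormedCommRing R] [NormOneClass R] (s : Finset ι)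
    (g : ι → R) : ‖∏ i ∈ s, g i‖ₑ ≤ ∏ i ∈ s, ‖g i‖ₑ := by
  simp only [enorm, ← ENNReal.ofNNReal_finsetProd, ENNReal.coe_le_coe]
  exact Finset.nnnorm_prod_le s g

theorem eLpNorm_prod_le_prod_eLpNorm {α ι R : Type*} [MeasurableSpace α] {μ : Measure α}
    [NormedCommRing R] [NormOneClass R] (s : Finset ι) {f : ι → α → R}
    (hf : ∀ i ∈ s, AEStronglyMeasurable (f i) μ) {p : ι → ℝ} (hp : ∀ i ∈ s, 0 < p i) {q : ℝ}
    (hpq : 1 / q = ∑ i ∈ s, 1 / p i) :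
    eLpNorm (fun x => ∏ i ∈ s, f i x) (ENNReal.ofReal q) μ
      ≤ ∏ i ∈ s, eLpNorm (f i) (ENNReal.ofReal (p i)) μ := by
  rcases le_or_gt q 0 with hq | hq
  -- only for `s = ∅`, where `1 / q = 0` forces `q = 0`; then the exponent `ofReal q` is `0`
  · simp [ENNReal.ofReal_of_nonpos hq]
  have hweights : ∑ i ∈ s, q / p i = 1 := by
    simp_rw [div_eq_mul_one_div q, ← Finset.mul_sum, ← hpq, mul_one_div_cancel hq.ne']
  rw [eLpNorm_eq_eLpNorm' (by simpa using hq) ENNReal.ofReal_ne_top, eLpNorm',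
    ENNReal.toReal_ofReal hq.le]
  calc (∫⁻ x, ‖∏ i ∈ s, f i x‖ₑ ^ q ∂μ) ^ (1 / q)
      ≤ (∫⁻ x, (∏ i ∈ s, ‖f i x‖ₑ) ^ q ∂μ) ^ (1 / q) := by
        gcongr with x
        exact Finset.enorm_prod_le s _
    _ = (∫⁻ x, ∏ i ∈ s, (‖f i x‖ₑ ^ p i) ^ (q / p i) ∂μ) ^ (1 / q) := by
        simp_rw [← ENNReal.rpow_mul, ← ENNReal.prod_rpow_of_nonneg hq.le]
        congr with x
        refine Finset.prod_congr rfl fun i hi => ?_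
        rw [mul_div_cancel₀ _ (hp i hi).ne']
    _ ≤ (∏ i ∈ s, (∫⁻ x, ‖f i x‖ₑ ^ p i ∂μ) ^ (q / p i)) ^ (1 / q) := by
        gcongr
        exact ENNReal.lintegral_prod_norm_pow_le s (fun i hi => (hf i hi).enorm.pow_const (p i))
          hweights fun i hi => (div_pos hq (hp i hi)).le
    _ = ∏ i ∈ s, eLpNorm (f i) (ENNReal.ofReal (p i)) μ := by
        rw [← ENNReal.prod_rpow_of_nonneg (by positivity)]
        refine Finset.prod_congr rfl fun i hi => ?_
        rw [eLpNorm_eq_eLpNorm' (by simpa using hp i hi) ENNReal.ofReal_ne_top, eLpNorm',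
          ENNReal.toReal_ofReal (hp i hi).le, ← ENNReal.rpow_mul]
        congr 1
        field_simp

section CubeBump

variable {E : Type*} [NormedAddCommGroup E]

/-- `l ^ n` plays the role of the volume `|Q|` of the cube with centre `c` and side `l`. -/
noncomputable def cubeBump (n : ℕ) (p s : ℝ) (c : E) (l : ℝ) (x : E) : ℝ :=
  (l ^ n) ^ (1 - 1 / p + s / n) / (‖x - c‖ + l) ^ ((n : ℝ) + s)

theorem cubeBump_nonneg (n : ℕ) (p s : ℝ) (c : E) {l : ℝ} (hl : 0 < l) (x : E) :
    0 ≤ cubeBump n p s c l x := by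
  unfold cubeBump; positivity

theorem measurable_cubeBump [MeasurableSpace E] [BorelSpace E] (n : ℕ) (p s : ℝ) (c : E)
    (l : ℝ) : Measurable (cubeBump n p s c l) := by
  unfold cubeBump; fun_prop

variable [NormedSpace ℝ E] [FiniteDimensional ℝ E] [MeasurableSpace E] [BorelSpace E]
  (μ : Measure E) [μ.IsAddHaarMeasure]

theorem lintegral_comp_smul (f : E → ℝ≥0∞) {r : ℝ} (hr : r ≠ 0) :
    ∫⁻ x, f (r • x) ∂μ = ENNReal.ofReal |(r ^ finrank ℝ E)⁻¹| * ∫⁻ x, f x ∂μ := by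
  rw [← smul_eq_mul, ← lintegral_smul_measure, ← Measure.map_addHaar_smul μ hr]
  exact (lintegral_map_equiv f (Homeomorph.smulOfNeZero r hr).toMeasurableEquiv).symm

theorem lintegral_ofReal_norm_sub_add_rpow_neg (c : E) {l : ℝ} (hl : 0 < l) (β : ℝ) :
    ∫⁻ x, ENNReal.ofReal ((‖x - c‖ + l) ^ (-β)) ∂μ
      = ENNReal.ofReal (l ^ ((finrank ℝ E : ℝ) - β)) *
        ∫⁻ x, ENNReal.ofReal ((1 + ‖x‖) ^ (-β)) ∂μ := by
  set d : ℝ := (finrank ℝ E : ℝ)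
  have hscale : ∀ x : E, ENNReal.ofReal ((‖l • x‖ + l) ^ (-β))
      = ENNReal.ofReal (l ^ (-β)) * ENNReal.ofReal ((1 + ‖x‖) ^ (-β)) := fun x => by
    rw [← ENNReal.ofReal_mul (by positivity), ← Real.mul_rpow hl.le (by positivity),
      norm_smul, Real.norm_of_nonneg hl.le, mul_one_add, add_comm]
  have hdilate := lintegral_comp_smul μ (fun x => ENNReal.ofReal ((‖x‖ + l) ^ (-β))) hl.ne'
  simp only [hscale, lintegral_const_mul' _ _ ENNReal.ofReal_ne_top] at hdilate
  have hjac : |(l ^ finrank ℝ E)⁻¹| = l ^ (-d) := by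
    rw [abs_of_pos (by positivity), Real.rpow_neg hl.le, Real.rpow_natCast]
  have hcancel : ENNReal.ofReal (l ^ d) * ENNReal.ofReal (l ^ (-d)) = 1 := by
    rw [← ENNReal.ofReal_mul (by positivity), ← Real.rpow_add hl, add_neg_cancel,
      Real.rpow_zero, ENNReal.ofReal_one]
  rw [lintegral_sub_right_eq_self (fun x => ENNReal.ofReal ((‖x‖ + l) ^ (-β))) c,
    sub_eq_add_neg, Real.rpow_add hl, ENNReal.ofReal_mul (by positivity), mul_assoc, hdilate,
    hjac, ← mul_assoc, hcancel, one_mul]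

theorem lintegral_ofReal_cubeBump_rpow {n : ℕ} (hd : finrank ℝ E = n) (hn : n ≠ 0) {p : ℝ}
    (hp : 0 < p) (s : ℝ) (c : E) {l : ℝ} (hl : 0 < l) :
    ∫⁻ x, ENNReal.ofReal (cubeBump n p s c l x) ^ p ∂μ
      = ∫⁻ x, ENNReal.ofReal ((1 + ‖x‖) ^ (-((n + s) * p))) ∂μ := by
  have hpow : ∀ x, cubeBump n p s c l x ^ p
      = l ^ (n * (1 - 1 / p + s / n) * p) * (‖x - c‖ + l) ^ (-((n + s) * p)) := fun x => by
    rw [cubeBump, Real.div_rpow (by positivity) (by positivity), ← Real.rpow_natCast,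
      ← Real.rpow_mul hl.le, ← Real.rpow_mul hl.le, ← Real.rpow_mul (by positivity),
      Real.rpow_neg (by positivity), div_eq_mul_inv]
  have hexp : (n : ℝ) * (1 - 1 / p + s / n) * p + ((n : ℝ) - (n + s) * p) = 0 := by
    field_simp
    ring
  simp only [ENNReal.ofReal_rpow_of_nonneg (cubeBump_nonneg n p s c hl _) hp.le, hpow,
    ENNReal.ofReal_mul (Real.rpow_nonneg hl.le _), lintegral_const_mul' _ _ ENNReal.ofReal_ne_top,
    lintegral_ofReal_norm_sub_add_rpow_neg μ c hl, hd, ← mul_assoc]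
  rw [← ENNReal.ofReal_mul (by positivity), ← Real.rpow_add hl, hexp, Real.rpow_zero,
    ENNReal.ofReal_one, one_mul]

theorem lintegral_enorm_sum_smul_cubeBump_rpow_le {ι : Type*} {n : ℕ} (hd : finrank ℝ E = n)
    (hn : n ≠ 0) {p : ℝ} (hp0 : 0 < p) (hp1 : p ≤ 1) (s : ℝ) (K : Finset ι) (c : ι → E)
    (l : ι → ℝ) (hl : ∀ k ∈ K, 0 < l k) (lam : ι → ℝ) (hlam : ∀ k ∈ K, 0 ≤ lam k) :
    ∫⁻ x, ‖∑ k ∈ K, lam k * cubeBump n p s (c k) (l k) x‖ₑ ^ p ∂μ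
      ≤ ENNReal.ofReal (∑ k ∈ K, lam k ^ p) *
        ∫⁻ x, ENNReal.ofReal ((1 + ‖x‖) ^ (-((n + s) * p))) ∂μ := by
  have hterm : ∀ k ∈ K, ∀ x, 0 ≤ lam k * cubeBump n p s (c k) (l k) x := fun k hk x =>
    mul_nonneg (hlam k hk) (cubeBump_nonneg n p s (c k) (hl k hk) x)
  calc ∫⁻ x, ‖∑ k ∈ K, lam k * cubeBump n p s (c k) (l k) x‖ₑ ^ p ∂μ
      ≤ ∫⁻ x, ∑ k ∈ K, ENNReal.ofReal (lam k) ^ p *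
          ENNReal.ofReal (cubeBump n p s (c k) (l k) x) ^ p ∂μ := by
        refine lintegral_mono fun x => ?_
        rw [Real.enorm_of_nonneg (Finset.sum_nonneg fun k hk => hterm k hk x),
          ENNReal.ofReal_sum_of_nonneg fun k hk => hterm k hk x]
        refine (ENNReal.rpow_finset_sum_le_sum_rpow _ _ hp0 hp1).trans_eq ?_
        refine Finset.sum_congr rfl fun k hk => ?_
        rw [ENNReal.ofReal_mul (hlam k hk), ENNReal.mul_rpow_of_nonneg _ _ hp0.le]
    _ = ∑ k ∈ K, ENNReal.ofReal (lam k ^ p) *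
          ∫⁻ x, ENNReal.ofReal ((1 + ‖x‖) ^ (-((n + s) * p))) ∂μ := by
        rw [lintegral_finsetSum _ fun k _ =>
          ((measurable_cubeBump n p s (c k) (l k)).ennreal_ofReal.pow_const p).const_mul _]
        refine Finset.sum_congr rfl fun k hk => ?_
        rw [lintegral_const_mul' _ _ (by simp [hp0.le]),
          lintegral_ofReal_cubeBump_rpow μ hd hn hp0 s (c k) (hl k hk),
          ENNReal.ofReal_rpow_of_nonneg (hlam k hk) hp0.le]
    _ = _ := by
        rw [← Finset.sum_mul, ENNReal.ofReal_sum_of_nonneg fun k hk =>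
          Real.rpow_nonneg (hlam k hk) p]

theorem eLpNorm_sum_smul_cubeBump_le {ι : Type*} {n : ℕ} (hd : finrank ℝ E = n) (hn : n ≠ 0)
    {p : ℝ} (hp0 : 0 < p) (hp1 : p ≤ 1) {s : ℝ} (hs : n * (1 / p - 1) < s) (K : Finset ι)
    (c : ι → E) (l : ι → ℝ) (hl : ∀ k ∈ K, 0 < l k) (lam : ι → ℝ)
    (hlam : ∀ k ∈ K, 0 ≤ lam k) :
    eLpNorm (fun x => ∑ k ∈ K, lam k * cubeBump n p s (c k) (l k) x) (ENNReal.ofReal p) μ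
      ≤ ENNReal.ofReal
          ((∫⁻ x, ENNReal.ofReal ((1 + ‖x‖) ^ (-((n + s) * p))) ∂μ).toReal ^ (1 / p) *
            (∑ k ∈ K, lam k ^ p) ^ (1 / p)) := by
  set I := ∫⁻ x, ENNReal.ofReal ((1 + ‖x‖) ^ (-((n + s) * p))) ∂μ
  have hdecay : (finrank ℝ E : ℝ) < (n + s) * p := by
    rw [hd, ← div_lt_iff₀ hp0]
    rw [mul_sub, mul_one, mul_one_div] at hs
    linarith
  have hI : I ≠ ⊤ := (finite_integral_one_add_norm hdecay).ne
  have hS : 0 ≤ ∑ k ∈ K, lam k ^ p := Finset.sum_nonneg fun k hk => Real.rpow_nonneg (hlam k hk) p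
  rw [eLpNorm_eq_eLpNorm' (by simpa using hp0) ENNReal.ofReal_ne_top, eLpNorm',
    ENNReal.toReal_ofReal hp0.le]
  calc (∫⁻ x, ‖∑ k ∈ K, lam k * cubeBump n p s (c k) (l k) x‖ₑ ^ p ∂μ) ^ (1 / p)
      ≤ (ENNReal.ofReal (∑ k ∈ K, lam k ^ p) * I) ^ (1 / p) := by
        gcongr
        exact lintegral_enorm_sum_smul_cubeBump_rpow_le μ hd hn hp0 hp1 s K c l hl lam hlam
    _ = _ := by
        rw [mul_comm, ENNReal.mul_rpow_of_nonneg _ _ (by positivity),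
          ENNReal.ofReal_mul (by positivity), ← ENNReal.ofReal_rpow_of_nonneg hS (by positivity),
          ← ENNReal.ofReal_rpow_of_nonneg ENNReal.toReal_nonneg (by positivity),
          ENNReal.ofReal_toReal hI]

end CubeBump

theorem stmt8_general (n m : ℕ) (hn : 1 ≤ n)
    (p : Fin m → ℝ) (hp0 : ∀ j, 0 < p j) (hp1 : ∀ j, p j ≤ 1)
    (q : ℝ) (hq : 1 / q = ∑ j, 1 / p j)
    (s : ℝ) (hs : ∀ j, (n : ℝ) * (1 / p j - 1) < s) :
    ∃ C : ℝ, 0 < C ∧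
      ∀ (K : Fin m → Finset ℕ) (c : Fin m → ℕ → EuclideanSpace ℝ (Fin n))
        (l : Fin m → ℕ → ℝ) (lam : Fin m → ℕ → ℝ),
        (∀ j k, 0 < l j k) →
        (∀ j k, 0 ≤ lam j k) →
        eLpNorm (fun x => ∏ j, ∑ k ∈ K j,
            lam j k * (l j k ^ n) ^ (1 - 1 / p j + s / n) /
              (‖x - c j k‖ + l j k) ^ ((n : ℝ) + s))
          (ENNReal.ofReal q) volume
        ≤ ENNReal.ofReal (C * ∏ j, (∑ k ∈ K j, lam j k ^ p j) ^ (1 / p j)) := by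
  set A : Fin m → ℝ := fun j => (∫⁻ x : EuclideanSpace ℝ (Fin n),
    ENNReal.ofReal ((1 + ‖x‖) ^ (-((n + s) * p j)))).toReal ^ (1 / p j)
  have hA : ∀ j, 0 ≤ A j := fun j => Real.rpow_nonneg ENNReal.toReal_nonneg _
  refine ⟨∏ j, A j + 1, by positivity, fun K c l lam hl hlam => ?_⟩
  set S : Fin m → ℝ := fun j => (∑ k ∈ K j, lam j k ^ p j) ^ (1 / p j)
  have hS : ∀ j, 0 ≤ S j := fun j =>
    Real.rpow_nonneg (Finset.sum_nonneg fun k _ => Real.rpow_nonneg (hlam j k) _) _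
  have hd : finrank ℝ (EuclideanSpace ℝ (Fin n)) = n := finrank_euclideanSpace_fin
  have hmeas : ∀ j, AEStronglyMeasurable
      (fun x => ∑ k ∈ K j, lam j k * cubeBump n (p j) s (c j k) (l j k) x) volume := fun j =>
    (Finset.measurable_sum _ fun k _ =>
      (measurable_cubeBump _ _ _ _ _).const_mul _).aestronglyMeasurable
  calc _ = eLpNorm (fun x => ∏ j, ∑ k ∈ K j, lam j k * cubeBump n (p j) s (c j k) (l j k) x)
        (ENNReal.ofReal q) volume := by simp only [cubeBump, mul_div_assoc]
    _ ≤ ∏ j, eLpNorm (fun x => ∑ k ∈ K j, lam j k * cubeBump n (p j) s (c j k) (l j k) x)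
          (ENNReal.ofReal (p j)) volume :=
        eLpNorm_prod_le_prod_eLpNorm _ (fun j _ => hmeas j) (fun j _ => hp0 j) hq
    _ ≤ ∏ j, ENNReal.ofReal (A j * S j) := Finset.prod_le_prod' fun j _ =>
        eLpNorm_sum_smul_cubeBump_le volume hd (by omega) (hp0 j) (hp1 j) (hs j) (K j) (c j)
          (l j) (fun k _ => hl j k) (lam j) fun k _ => hlam j k
    _ = ENNReal.ofReal ((∏ j, A j) * ∏ j, S j) := by
        rw [← Finset.prod_mul_distrib,
          ENNReal.ofReal_prod_of_nonneg fun j _ => mul_nonneg (hA j) (hS j)]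
    _ ≤ ENNReal.ofReal ((∏ j, A j + 1) * ∏ j, S j) := by
        gcongr
        · exact Finset.prod_nonneg fun j _ => hS j
        · linarith

/-- Let `0 < p_j ≤ 1`, `1/p = ∑ 1/p_j`, and `s > n(1/p_j - 1)` for all `j`. Then
`‖∏_j ∑_k λ_{j,k} |Q_{j,k}|^{1-1/p_j+s/n} (|x-c_{j,k}|+l_{j,k})^{-(n+s)}‖_{L^p}
  ≤ C ∏_j (∑_k λ_{j,k}^{p_j})^{1/p_j}`. -/
theorem stmt8 (n m : ℕ) (hn : 1 ≤ n) (hm : 1 ≤ m)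
    (p : Fin m → ℝ) (hp0 : ∀ j, 0 < p j) (hp1 : ∀ j, p j ≤ 1)
    (q : ℝ) (hq : 1 / q = ∑ j, 1 / p j)
    (s : ℝ) (hs : ∀ j, (n : ℝ) * (1 / p j - 1) < s) :
    ∃ C : ℝ, 0 < C ∧
      ∀ (K : Fin m → Finset ℕ) (c : Fin m → ℕ → EuclideanSpace ℝ (Fin n))
        (l : Fin m → ℕ → ℝ) (lam : Fin m → ℕ → ℝ),
        (∀ j k, 0 < l j k) →
        (∀ j k, 0 ≤ lam j k) →
        eLpNorm (fun x => ∏ j, ∑ k ∈ K j,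
            lam j k * (l j k ^ n) ^ (1 - 1 / p j + s / n) /
              (‖x - c j k‖ + l j k) ^ ((n : ℝ) + s))
          (ENNReal.ofReal q) volume
        ≤ ENNReal.ofReal (C * ∏ j, (∑ k ∈ K j, lam j k ^ p j) ^ (1 / p j)) :=
  stmt8_general n m hn p hp0 hp1 q hq s hs
end
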